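/- For any semistandard Young tableau T, the insertion tableau of its reading word equals T, i.e. Tab(W(T)) = T, where W(T) reads the rows of T from left to right, starting with the bottom row and proceeding upward. -/

import Mathlib

/-- Schensted row-insertion of `x` into a single row: returns the new row and
the bumped letter (if any). -/
def insertRow : List ℕ → ℕ → List ℕ × Option ℕ
  | [], x => ([x], none)
  | y :: r, x =>
      if x < y then (x :: r, some y)
      else
        let p := insertRow r x
        (y :: p.1, p.2)

/-- Row-insertion of a letter into a tableau (list of rows, top row first). -/
def insertTableau : List (List ℕ) → ℕ → List (List ℕ)
  | [], x => [[x]]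
  | r :: t, x =>
      let p := insertRow r x
      match p.2 with
      | none => p.1 :: t
      | some y => p.1 :: insertTableau t y

/-- The insertion tableau (P-symbol) of a word, obtained by row-inserting its
letters from left to right into the empty tableau. -/
def Tab (w : List ℕ) : List (List ℕ) := w.foldl insertTableau []

/-- A semistandard Young tableau, encoded as its list of rows from top to
bottom: rows are nonempty and weakly increasing, row lengths weakly decrease,
and columns strictly increase downwards. -/
def IsSSYT (t : List (List ℕ)) : Prop :=
  (∀ r ∈ t, r ≠ []) ∧
  (∀ r ∈ t, r.Pairwise (· ≤ ·)) ∧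
  (∀ i, i + 1 < t.length → (t.getD (i + 1) []).length ≤ (t.getD i []).length) ∧
  (∀ i j, i + 1 < t.length → j < (t.getD (i + 1) []).length →
      (t.getD i []).getD j 0 < (t.getD (i + 1) []).getD j 0)

/-- The reading word of a tableau: the rows read from bottom to top, each row
left to right. -/
def readingWord (t : List (List ℕ)) : List ℕ := t.reverse.flatten

lemma insertRow_top (a : List ℕ) (x : ℕ) (h : ∀ z ∈ a, z ≤ x) :
    insertRow a x = (a ++ [x], none) := by
  induction a with
  | nil => rfl
  | cons z a ih =>
      have hz : z ≤ x := h z (by simp)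
      simp only [insertRow, if_neg (not_lt.mpr hz)]
      rw [ih (fun w hw => h w (by simp [hw]))]
      simp

lemma insertRow_bump (a : List ℕ) (x y : ℕ) (s : List ℕ)
    (h : ∀ z ∈ a, z ≤ x) (hxy : x < y) :
    insertRow (a ++ y :: s) x = (a ++ x :: s, some y) := by
  induction a with
  | nil => simp [insertRow, hxy]
  | cons z a ih =>
      have hz : z ≤ x := h z (by simp)
      simp only [List.cons_append, insertRow, if_neg (not_lt.mpr hz), List.append_eq]
      rw [ih (fun w hw => h w (by simp [hw]))]

lemma foldl_insert_generic : ∀ (r t0 a : List ℕ) (t' : List (List ℕ)),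
    (a ++ r).Pairwise (· ≤ ·) → t0.length ≤ r.length →
    (∀ j, j < t0.length → r.getD j 0 < t0.getD j 0) →
    List.foldl insertTableau ((a ++ t0) :: t') r = (a ++ r) :: List.foldl insertTableau t' t0
  | [], t0, a, t', hs, hl, hd => by
      have ht0 : t0 = [] := List.eq_nil_of_length_eq_zero (Nat.le_zero.mp hl)
      subst ht0; simp
  | x :: r1, [], a, t', hs, hl, hd => by
      have ha : ∀ z ∈ a, z ≤ x :=
        fun z hz => (List.pairwise_append.mp hs).2.2 z hz x (by simp)
      have h1 : insertTableau (a :: t') x = (a ++ [x]) :: t' := by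
        cases a with
        | nil => rfl
        | cons b a' =>
            simp [insertTableau, insertRow_top _ x ha]
      simp only [List.append_nil, List.foldl_cons, h1]
      have := foldl_insert_generic r1 [] (a ++ [x]) t'
        (by simpa using hs) (by simp) (by simp)
      simpa using this
  | x :: r1, y :: s, a, t', hs, hl, hd => by
      have ha : ∀ z ∈ a, z ≤ x :=
        fun z hz => (List.pairwise_append.mp hs).2.2 z hz x (by simp)
      have hxy : x < y := by simpa using hd 0 (by simp)
      have h1 : insertTableau ((a ++ y :: s) :: t') x
          = (a ++ x :: s) :: insertTableau t' y := by
        simp [insertTableau, insertRow_bump a x y s ha hxy]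
      have ih := foldl_insert_generic r1 s (a ++ [x]) (insertTableau t' y)
        (by simpa using hs)
        (by simpa using Nat.succ_le_succ_iff.mp hl)
        (fun j hj => by simpa using hd (j + 1) (by simpa using Nat.succ_lt_succ hj))
      simp only [List.foldl_cons, h1]
      simpa using ih

lemma IsSSYT.tail {r : List ℕ} {t : List (List ℕ)} (h : IsSSYT (r :: t)) : IsSSYT t := by
  obtain ⟨h1, h2, h3, h4⟩ := h
  refine ⟨fun s hs => h1 s (by simp [hs]), fun s hs => h2 s (by simp [hs]), ?_, ?_⟩
  · intro i hi
    have := h3 (i + 1) (by simpa using Nat.succ_lt_succ hi)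
    simpa using this
  · intro i j hi hj
    have := h4 (i + 1) j (by simpa using Nat.succ_lt_succ hi) (by simpa using hj)
    simpa using this

lemma insert_full : ∀ (t : List (List ℕ)) (r : List ℕ), IsSSYT (r :: t) →
    List.foldl insertTableau t r = r :: t
  | [], r, h => by
      have hr : r ≠ [] := h.1 r (by simp)
      have hs : r.Pairwise (· ≤ ·) := h.2.1 r (by simp)
      obtain ⟨x, r1, rfl⟩ := List.exists_cons_of_ne_nil hr
      have := foldl_insert_generic r1 [] [x] []
        (by simpa using hs) (by simp) (by simp)
      simpa [insertTableau] using this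
  | t0 :: t', r, h => by
      have hs : r.Pairwise (· ≤ ·) := h.2.1 r (by simp)
      have hl : t0.length ≤ r.length := by
        have := h.2.2.1 0 (by simp)
        simpa using this
      have hd : ∀ j, j < t0.length → r.getD j 0 < t0.getD j 0 := by
        intro j hj
        have := h.2.2.2 0 j (by simp) (by simpa using hj)
        simpa using this
      have L := foldl_insert_generic r t0 [] t' (by simpa using hs) hl hd
      simp only [List.nil_append] at L
      rw [L, insert_full t' t0 h.tail]

/-- Inserting the reading word of a semistandard tableau recovers the
tableau: `Tab (W T) = T`. -/
theorem tab_readingWord (T : List (List ℕ)) (hT : IsSSYT T) :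
    Tab (readingWord T) = T := by
  induction T with
  | nil => rfl
  | cons r t ih =>
      have hw : readingWord (r :: t) = readingWord t ++ r := by
        simp [readingWord]
      have : Tab (readingWord (r :: t))
          = List.foldl insertTableau (Tab (readingWord t)) r := by
        rw [hw]; simp [Tab, List.foldl_append]
      rw [this, ih hT.tail, insert_full t r hT]
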